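/- Let ℓ₁,…,ℓₙ : ℝ^d → ℝ be differentiable with L-Lipschitz gradients, let 0 < η ≤ 1/L, and let x_{k+1} = x_k - η∇ℓ_{ξ_k}(x_k) where ξ_k ∈ {1,…,n}. Let x* be a common global minimizer of all ℓ_i. If for a given epoch (iterations k = nB, …, n(B+1)-1) the cumulative star-convexity ∑_{k=nB}^{n(B+1)-1} [ℓ_{ξ_k}(x_k) - ℓ_{ξ_k}(x*) + ⟨x* - x_k, ∇ℓ_{ξ_k}(x_k)⟩] ≤ 0 holds, then ‖x_{n(B+1)} - x*‖ ≤ ‖x_{nB} - x*‖. -/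

import Mathlib

open scoped RealInnerProductSpace BigOperators


variable {F : Type*} [NormedAddCommGroup F] [InnerProductSpace ℝ F] [CompleteSpace F]

/-- Descent lemma: smooth functions satisfy a quadratic upper bound. -/
lemma descent_lemma (f : F → ℝ) (g : F → F) (L : ℝ) (hL : 0 < L)
    (hgrad : ∀ z, HasGradientAt f (g z) z)
    (hlip : ∀ u v, ‖g u - g v‖ ≤ L * ‖u - v‖) (x y : F) :
    f y ≤ f x + ⟪g x, y - x⟫ + L / 2 * ‖y - x‖ ^ 2 := by
  set v := y - x with hv
  set φ : ℝ → ℝ := fun t => f (x + t • v) - t * ⟪g x, v⟫ - t ^ 2 * (L / 2) * ‖v‖ ^ 2 with hφ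
  have hline : ∀ t : ℝ, HasDerivAt (fun s : ℝ => x + s • v) v t := by
    intro t
    simpa using ((hasDerivAt_id t).smul_const v).const_add x
  have hder : ∀ t : ℝ, HasDerivAt φ
      (⟪g (x + t • v), v⟫ - ⟪g x, v⟫ - (2 * t) * (L / 2) * ‖v‖ ^ 2) t := by
    intro t
    have h1 : HasDerivAt (fun s : ℝ => f (x + s • v)) ⟪g (x + t • v), v⟫ t := by
      have := ((hgrad (x + t • v)).hasFDerivAt).comp_hasDerivAt t (hline t)
      simp at this; exact this
    have h2 : HasDerivAt (fun s : ℝ => s * ⟪g x, v⟫) ⟪g x, v⟫ t := by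
      simpa using (hasDerivAt_id t).mul_const ⟪g x, v⟫
    have h3 : HasDerivAt (fun s : ℝ => s ^ 2 * (L / 2) * ‖v‖ ^ 2)
        ((2 * t) * (L / 2) * ‖v‖ ^ 2) t := by
      have := ((hasDerivAt_pow 2 t).mul_const (L / 2)).mul_const (‖v‖ ^ 2)
      simpa [mul_comm, mul_assoc, mul_left_comm] using this
    exact (h1.sub h2).sub h3
  have hanti : AntitoneOn φ (Set.Icc 0 1) := by
    apply antitoneOn_of_deriv_nonpos (convex_Icc 0 1)
    · exact fun t _ => ((hder t).continuousAt.continuousWithinAt)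
    · exact fun t _ => ((hder t).differentiableAt.differentiableWithinAt)
    · intro t ht
      rw [interior_Icc] at ht
      rw [(hder t).deriv]
      have hb : ⟪g (x + t • v) - g x, v⟫ ≤ L * t * ‖v‖ ^ 2 := by
        calc ⟪g (x + t • v) - g x, v⟫ ≤ ‖g (x + t • v) - g x‖ * ‖v‖ :=
              real_inner_le_norm _ _
          _ ≤ (L * ‖(x + t • v) - x‖) * ‖v‖ := by
              gcongr
              exact hlip _ _
          _ = L * (|t| * ‖v‖) * ‖v‖ := by rw [add_sub_cancel_left, norm_smul]; norm_num
          _ = L * t * ‖v‖ ^ 2 := by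
              rw [abs_of_pos ht.1]; ring
      have heq : ⟪g (x + t • v), v⟫ - ⟪g x, v⟫ = ⟪g (x + t • v) - g x, v⟫ := by
        rw [inner_sub_left]
      nlinarith [hb, heq]
  have h01 := hanti (Set.mem_Icc.2 ⟨le_refl 0, zero_le_one⟩)
    (Set.mem_Icc.2 ⟨zero_le_one, le_refl 1⟩) zero_le_one
  simp only [hφ, one_smul, zero_smul, add_zero] at h01
  have : x + v = y := by rw [hv]; abel
  rw [this] at h01
  linarith

lemma grad_sq_le (f : F → ℝ) (g : F → F) (L : ℝ) (hL : 0 < L)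
    (hgrad : ∀ z, HasGradientAt f (g z) z)
    (hlip : ∀ u v, ‖g u - g v‖ ≤ L * ‖u - v‖)
    (xstar : F) (hmin : ∀ y, f xstar ≤ f y) (z : F) :
    ‖g z‖ ^ 2 ≤ 2 * L * (f z - f xstar) := by
  have h := descent_lemma f g L hL hgrad hlip z (z - (1 / L) • g z)
  have hy : z - (1 / L) • g z - z = -((1 / L) • g z) := by abel
  rw [hy] at h
  have hnorm : ‖-((1 / L) • g z)‖ ^ 2 = (1 / L) ^ 2 * ‖g z‖ ^ 2 := by
    rw [norm_neg, norm_smul]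
    simp [abs_of_pos (one_div_pos.2 hL), mul_pow]
  have hinner : ⟪g z, -((1 / L) • g z)⟫ = -(1 / L) * ‖g z‖ ^ 2 := by
    rw [inner_neg_right, real_inner_smul_right, real_inner_self_eq_norm_sq]
    ring
  rw [hnorm, hinner] at h
  have h2 := hmin (z - (1 / L) • g z)
  have hLne : L ≠ 0 := ne_of_gt hL
  have e : -(1 / L) * ‖g z‖ ^ 2 + L / 2 * ((1 / L) ^ 2 * ‖g z‖ ^ 2)
      = -((1 / (2 * L)) * ‖g z‖ ^ 2) := by field_simp; ring
  have h3 : (1 / (2 * L)) * ‖g z‖ ^ 2 ≤ f z - f xstar := by linarith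
  have hpos : (0:ℝ) < 2 * L := by linarith
  calc ‖g z‖ ^ 2 = (2 * L) * ((1 / (2 * L)) * ‖g z‖ ^ 2) := by field_simp
    _ ≤ (2 * L) * (f z - f xstar) := by
        exact mul_le_mul_of_nonneg_left h3 (le_of_lt hpos)
    _ = 2 * L * (f z - f xstar) := by ring

theorem sgd_epochwise_diminishing_distance {d n : ℕ}
    (ℓ : Fin n → EuclideanSpace ℝ (Fin d) → ℝ)
    (g : Fin n → EuclideanSpace ℝ (Fin d) → EuclideanSpace ℝ (Fin d))
    (L η : ℝ) (hL : 0 < L)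
    (hgrad : ∀ i z, HasGradientAt (ℓ i) (g i z) z)
    (hlip : ∀ i u v, ‖g i u - g i v‖ ≤ L * ‖u - v‖)
    (hη : 0 < η) (hηL : η ≤ 1 / L)
    (x : ℕ → EuclideanSpace ℝ (Fin d)) (ξ : ℕ → Fin n)
    (hupd : ∀ k, x (k + 1) = x k - η • g (ξ k) (x k))
    (xstar : EuclideanSpace ℝ (Fin d))
    (hmin : ∀ i y, ℓ i xstar ≤ ℓ i y)
    (B : ℕ)
    (hstar : ∑ t ∈ Finset.range n,
        (ℓ (ξ (n * B + t)) (x (n * B + t)) - ℓ (ξ (n * B + t)) xstar +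
          ⟪xstar - x (n * B + t), g (ξ (n * B + t)) (x (n * B + t))⟫) ≤ 0) :
    ‖x (n * (B + 1)) - xstar‖ ≤ ‖x (n * B) - xstar‖ := by
  -- per-step inequality
  have step : ∀ k, ‖x (k + 1) - xstar‖ ^ 2 - ‖x k - xstar‖ ^ 2 ≤
      2 * η * (ℓ (ξ k) (x k) - ℓ (ξ k) xstar + ⟪xstar - x k, g (ξ k) (x k)⟫) := by
    intro k
    set G := g (ξ k) (x k) with hG
    have hexp : x (k + 1) - xstar = (x k - xstar) - η • G := by
      rw [hupd k]; abel
    have hsq : ‖x (k + 1) - xstar‖ ^ 2 =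
        ‖x k - xstar‖ ^ 2 - 2 * (η * ⟪x k - xstar, G⟫) + η ^ 2 * ‖G‖ ^ 2 := by
      rw [hexp, @norm_sub_sq_real, real_inner_smul_right, norm_smul]
      rw [Real.norm_eq_abs, abs_of_pos hη, mul_pow]
    have hGsq : ‖G‖ ^ 2 ≤ 2 * L * (ℓ (ξ k) (x k) - ℓ (ξ k) xstar) :=
      grad_sq_le (ℓ (ξ k)) (g (ξ k)) L hL (hgrad (ξ k)) (hlip (ξ k)) xstar
        (hmin (ξ k)) (x k)
    have hgap : (0:ℝ) ≤ ℓ (ξ k) (x k) - ℓ (ξ k) xstar := by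
      linarith [hmin (ξ k) (x k)]
    have hη2 : η ^ 2 * ‖G‖ ^ 2 ≤ 2 * η * (ℓ (ξ k) (x k) - ℓ (ξ k) xstar) := by
      have h1 : η ^ 2 * ‖G‖ ^ 2 ≤ η ^ 2 * (2 * L * (ℓ (ξ k) (x k) - ℓ (ξ k) xstar)) :=
        mul_le_mul_of_nonneg_left hGsq (sq_nonneg η)
      have h2 : η * L ≤ 1 := by
        rw [le_div_iff₀ hL] at hηL; linarith
      have h3 : 0 ≤ η * ((1 - η * L) * (ℓ (ξ k) (x k) - ℓ (ξ k) xstar)) :=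
        mul_nonneg hη.le (mul_nonneg (by linarith) hgap)
      nlinarith [h1, h3]
    have hswap : ⟪xstar - x k, G⟫ = -⟪x k - xstar, G⟫ := by
      rw [← inner_neg_left]; congr 1; abel
    rw [hsq, hswap]
    linarith
  have hsum : ‖x (n * B + n) - xstar‖ ^ 2 - ‖x (n * B) - xstar‖ ^ 2 ≤
      2 * η * ∑ t ∈ Finset.range n,
        (ℓ (ξ (n * B + t)) (x (n * B + t)) - ℓ (ξ (n * B + t)) xstar +
          ⟪xstar - x (n * B + t), g (ξ (n * B + t)) (x (n * B + t))⟫) := by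
    rw [Finset.mul_sum]
    have tele : ∑ t ∈ Finset.range n,
        (‖x (n * B + (t + 1)) - xstar‖ ^ 2 - ‖x (n * B + t) - xstar‖ ^ 2)
        = ‖x (n * B + n) - xstar‖ ^ 2 - ‖x (n * B + 0) - xstar‖ ^ 2 :=
      Finset.sum_range_sub (fun t => ‖x (n * B + t) - xstar‖ ^ 2) n
    rw [add_zero] at tele
    rw [← tele]
    apply Finset.sum_le_sum
    intro t _
    have := step (n * B + t)
    simpa [add_assoc] using this
  have hfin : ‖x (n * B + n) - xstar‖ ^ 2 ≤ ‖x (n * B) - xstar‖ ^ 2 := by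
    have h2 : 2 * η * ∑ t ∈ Finset.range n,
        (ℓ (ξ (n * B + t)) (x (n * B + t)) - ℓ (ξ (n * B + t)) xstar +
          ⟪xstar - x (n * B + t), g (ξ (n * B + t)) (x (n * B + t))⟫) ≤ 0 := by
      apply mul_nonpos_of_nonneg_of_nonpos (by linarith) hstar
    linarith
  have hidx : n * (B + 1) = n * B + n := by ring
  rw [hidx]
  have := Real.sqrt_le_sqrt hfin
  rwa [Real.sqrt_sq (norm_nonneg _), Real.sqrt_sq (norm_nonneg _)] at this
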